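/- Let T be a tree-structured static attack tree, α : BAS → V an attribution, and (V, ▽, △) a semiring attribute domain (▽ and △ associative and commutative, △ distributes over ▽). Then the bottom-up evaluation BU(T), defined by BU(a) = α(a), BU(OR(v₁,v₂)) = BU(v₁) ▽ BU(v₂), BU(AND(v₁,v₂)) = BU(v₁) △ BU(v₂), equals the metric ▽_{A ∈ ⟦T⟧} △_{a ∈ A} α(a), where ⟦T⟧ is the nonempty set of minimal successful attacks of T. -/
import Mathlib


open scoped Classical

/-- Static attack trees over a set `β` of basic attack steps. -/
inductive SAT (β : Type) : Type where
  | bas : β → SAT β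
  | or : SAT β → SAT β → SAT β
  | and : SAT β → SAT β → SAT β

/-- Structure function on finite attacks. -/
def SAT.sf {β : Type} : SAT β → Finset β → Prop
  | .bas a, A => a ∈ A
  | .or t₁ t₂, A => t₁.sf A ∨ t₂.sf A
  | .and t₁ t₂, A => t₁.sf A ∧ t₂.sf A

/-- BAS leaves occurring in the tree. -/
def SAT.leaves {β : Type} [DecidableEq β] : SAT β → Finset β
  | .bas a => {a}
  | .or t₁ t₂ => t₁.leaves ∪ t₂.leaves
  | .and t₁ t₂ => t₁.leaves ∪ t₂.leaves

/-- Proper tree structure: the BAS sets of the two children of any gate are disjoint. -/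
def SAT.isTree {β : Type} [DecidableEq β] : SAT β → Prop
  | .bas _ => True
  | .or t₁ t₂ => t₁.isTree ∧ t₂.isTree ∧ Disjoint t₁.leaves t₂.leaves
  | .and t₁ t₂ => t₁.isTree ∧ t₂.isTree ∧ Disjoint t₁.leaves t₂.leaves

/-- `A` is a minimal successful attack at `t`. -/
def SAT.minimalAttack {β : Type} (t : SAT β) (A : Finset β) : Prop :=
  t.sf A ∧ ∀ B ⊂ A, ¬ t.sf B

/-- Semantics `⟦t⟧`: the (finite) set of minimal successful attacks. -/
noncomputable def SAT.sem {β : Type} [Fintype β] (t : SAT β) : Finset (Finset β) :=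
  Finset.univ.powerset.filter (fun A => t.minimalAttack A)

/-- Fold of an associative commutative operation over a list;
`none` for the empty list (no neutral element is assumed). -/
def foldList {V : Type} (op : V → V → V) : List V → Option V
  | [] => none
  | x :: xs => some ((foldList op xs).elim x (fun y => op x y))

/-- Bottom-up evaluation: `▽` at OR gates, `△` at AND gates, `α` at leaves. -/
def SAT.bu {β V : Type} (dis con : V → V → V) (α : β → V) : SAT β → V
  | .bas a => α a
  | .or t₁ t₂ => dis (t₁.bu dis con α) (t₂.bu dis con α)
  | .and t₁ t₂ => con (t₁.bu dis con α) (t₂.bu dis con α)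



variable {V : Type}

/-- Extend a binary operation to `Option V` with `none` as identity. -/
def oop (op : V → V → V) : Option V → Option V → Option V
  | none, b => b
  | some x, none => some x
  | some x, some y => some (op x y)

lemma oop_none_left (op : V → V → V) (b : Option V) : oop op none b = b := rfl

lemma oop_none_right (op : V → V → V) : ∀ a : Option V, oop op a none = a := by
  rintro (_ | x) <;> rfl

lemma oop_comm (op : V → V → V) (h : ∀ x y, op x y = op y x) :
    Std.Commutative (oop op) := by
  constructor; rintro (_ | x) (_ | y) <;> first | rfl | exact congrArg some (h _ _)

lemma oop_assoc (op : V → V → V) (h : ∀ x y z, op (op x y) z = op x (op y z)) :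
    Std.Associative (oop op) := by
  constructor; rintro (_ | x) (_ | y) (_ | z) <;> first | rfl | exact congrArg some (h _ _ _)

lemma foldList_eq_foldr (op : V → V → V) (l : List V) :
    foldList op l = (l.map some).foldr (oop op) none := by
  induction l with
  | nil => rfl
  | cons x xs ih =>
    simp only [foldList, List.map_cons, List.foldr_cons, ← ih]
    cases foldList op xs <;> rfl

lemma foldList_filterMap (op : V → V → V) {γ : Type} (g : γ → Option V) (l : List γ) :
    foldList op (l.filterMap g) = (l.map g).foldr (oop op) none := by
  induction l with
  | nil => rfl
  | cons a l ih =>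
    cases h : g a with
    | none => simp [List.filterMap_cons, h, ← ih, oop_none_left]
    | some x =>
      simp only [List.filterMap_cons, h, List.map_cons, List.foldr_cons, ← ih]
      show some ((foldList op (l.filterMap g)).elim x _) = _
      cases foldList op (l.filterMap g) <;> rfl

lemma fold_eq_foldr {γ W : Type} (op : W → W → W)
    [Std.Commutative op] [Std.Associative op] (b : W) (F : γ → W) (s : Finset γ) :
    s.fold op b F = (s.toList.map F).foldr op b := by
  rw [Finset.fold, ← Finset.coe_toList s, Multiset.map_coe, Multiset.coe_fold_r]

lemma fold_union_disjoint {γ : Type} [DecidableEq γ] (op : V → V → V)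
    [Std.Commutative (oop op)] [Std.Associative (oop op)]
    (F : γ → Option V) {s t : Finset γ} (h : Disjoint s t) :
    (s ∪ t).fold (oop op) none F
      = oop op (s.fold (oop op) none F) (t.fold (oop op) none F) := by
  induction s using Finset.induction_on with
  | empty => simp [oop_none_left]
  | @insert a s ha ih =>
    have hat : a ∉ s ∪ t := by
      simp only [Finset.mem_union, not_or]
      exact ⟨ha, (Finset.disjoint_left.mp h) (Finset.mem_insert_self a s)⟩
    rw [Finset.insert_union, Finset.fold_insert hat,
      Finset.fold_insert ha, ih (h.mono_left (Finset.subset_insert a s))]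
    exact (Std.Associative.assoc (op := oop op) _ _ _).symm

lemma fold_isSome {γ : Type} (op : V → V → V)
    [Std.Commutative (oop op)] [Std.Associative (oop op)]
    (F : γ → Option V) {s : Finset γ} (hs : s.Nonempty)
    (hF : ∀ a ∈ s, (F a).isSome) : (s.fold (oop op) none F).isSome := by
  induction hs using Finset.Nonempty.cons_induction with
  | singleton a => simpa [oop_none_right] using hF a (by simp)
  | cons a s ha hs ih =>
    rw [Finset.fold_cons]
    have h1 := hF a (by simp)
    have h2 := ih (fun b hb => hF b (by simp [hb]))
    cases hFa : F a <;> cases hfold : s.fold (oop op) none F <;>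
      simp_all [oop]

section Sem

variable {β : Type} [Fintype β] [DecidableEq β]

lemma sf_congr (t : SAT β) {A B : Finset β}
    (h : ∀ a ∈ t.leaves, (a ∈ A ↔ a ∈ B)) : t.sf A ↔ t.sf B := by
  induction t with
  | bas a => exact h a (by simp [SAT.leaves])
  | or t₁ t₂ ih₁ ih₂ =>
    simp only [SAT.sf]
    rw [ih₁ (fun a ha => h a (by simp [SAT.leaves, ha])),
      ih₂ (fun a ha => h a (by simp [SAT.leaves, ha]))]
  | and t₁ t₂ ih₁ ih₂ =>
    simp only [SAT.sf]
    rw [ih₁ (fun a ha => h a (by simp [SAT.leaves, ha])),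
      ih₂ (fun a ha => h a (by simp [SAT.leaves, ha]))]

lemma sf_mono (t : SAT β) {A B : Finset β} (h : A ⊆ B) (hA : t.sf A) : t.sf B := by
  induction t with
  | bas a => exact h hA
  | or t₁ t₂ ih₁ ih₂ => exact hA.imp ih₁ ih₂
  | and t₁ t₂ ih₁ ih₂ => exact ⟨ih₁ hA.1, ih₂ hA.2⟩

lemma sf_empty (t : SAT β) : ¬ t.sf (∅ : Finset β) := by
  induction t with
  | bas a => simp [SAT.sf]
  | or t₁ t₂ ih₁ ih₂ => rintro (h | h) <;> [exact ih₁ h; exact ih₂ h]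
  | and t₁ t₂ ih₁ ih₂ => exact fun h => ih₁ h.1

lemma mem_sem {t : SAT β} {A : Finset β} : A ∈ t.sem ↔ t.minimalAttack A := by
  simp [SAT.sem]

lemma sem_subset_leaves {t : SAT β} {A : Finset β} (hA : A ∈ t.sem) : A ⊆ t.leaves := by
  rw [mem_sem] at hA
  obtain ⟨hsf, hmin⟩ := hA
  by_contra hsub
  have hss : A ∩ t.leaves ⊂ A := by
    refine Finset.ssubset_iff_subset_ne.mpr ⟨Finset.inter_subset_left, fun he => hsub ?_⟩
    intro a ha
    exact (Finset.mem_inter.mp (he ▸ ha)).2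
  exact hmin _ hss ((sf_congr t (fun a ha => by simp [Finset.mem_inter, ha])).mp hsf)

lemma sem_nonempty_mem {t : SAT β} {A : Finset β} (hA : A ∈ t.sem) : A.Nonempty := by
  rcases A.eq_empty_or_nonempty with rfl | h
  · exact absurd (mem_sem.mp hA).1 (sf_empty t)
  · exact h

lemma sem_bas (a : β) : (SAT.bas a).sem = ({({a} : Finset β)} : Finset (Finset β)) := by
  ext A
  rw [mem_sem, Finset.mem_singleton]
  constructor
  · rintro ⟨ha, hmin⟩
    have hsub : ({a} : Finset β) ⊆ A := Finset.singleton_subset_iff.mpr ha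
    by_contra hne
    exact hmin {a} (Finset.ssubset_iff_subset_ne.mpr ⟨hsub, Ne.symm hne⟩)
      (Finset.mem_singleton_self a)
  · rintro rfl
    refine ⟨Finset.mem_singleton_self a, fun B hB hsf => ?_⟩
    rw [Finset.eq_empty_of_ssubset_singleton hB] at hsf
    exact absurd hsf (by simp [SAT.sf])

lemma sem_or {t₁ t₂ : SAT β} (hd : Disjoint t₁.leaves t₂.leaves) :
    (SAT.or t₁ t₂).sem = t₁.sem ∪ t₂.sem := by
  have key : ∀ (s s' : SAT β), Disjoint s.leaves s'.leaves →
      ∀ A ∈ s.sem, ∀ B ⊂ A, ¬ s'.sf B := by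
    intro s s' hdis A hA B hB hsf
    have hBsub : ∀ a ∈ s'.leaves, a ∈ B ↔ a ∈ (∅ : Finset β) := by
      intro a ha
      simp only [Finset.notMem_empty, iff_false]
      exact fun hmem => Finset.disjoint_left.mp hdis
        (sem_subset_leaves hA (hB.subset hmem)) ha
    exact sf_empty s' ((sf_congr s' hBsub).mp hsf)
  ext A
  rw [Finset.mem_union, mem_sem, mem_sem, mem_sem]
  constructor
  · rintro ⟨h12, hmin⟩
    rcases h12 with h | h
    · exact Or.inl ⟨h, fun B hB hsf => hmin B hB (Or.inl hsf)⟩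
    · exact Or.inr ⟨h, fun B hB hsf => hmin B hB (Or.inr hsf)⟩
  · rintro (⟨h, hmin⟩ | ⟨h, hmin⟩)
    · exact ⟨Or.inl h, fun B hB => by
        rintro (hsf | hsf)
        · exact hmin B hB hsf
        · exact key t₁ t₂ hd A (mem_sem.mpr ⟨h, hmin⟩) B hB hsf⟩
    · exact ⟨Or.inr h, fun B hB => by
        rintro (hsf | hsf)
        · exact key t₂ t₁ hd.symm A (mem_sem.mpr ⟨h, hmin⟩) B hB hsf
        · exact hmin B hB hsf⟩

end Sem
section SemAnd

variable {β : Type} [Fintype β] [DecidableEq β]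

set_option linter.unusedSectionVars false

lemma sem_and {t₁ t₂ : SAT β} (hd : Disjoint t₁.leaves t₂.leaves) :
    (SAT.and t₁ t₂).sem = (t₁.sem ×ˢ t₂.sem).image (fun p => p.1 ∪ p.2) := by
  ext A
  rw [mem_sem, Finset.mem_image]
  constructor
  · rintro ⟨⟨h1, h2⟩, hmin⟩
    set A₁ := A ∩ t₁.leaves with hA₁
    set A₂ := A ∩ t₂.leaves with hA₂
    have hsf1 : t₁.sf A₁ :=
      (sf_congr t₁ (fun a ha => by simp [hA₁, Finset.mem_inter, ha])).mp h1
    have hsf2 : t₂.sf A₂ :=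
      (sf_congr t₂ (fun a ha => by simp [hA₂, Finset.mem_inter, ha])).mp h2
    have hsub : A₁ ∪ A₂ ⊆ A :=
      Finset.union_subset Finset.inter_subset_left Finset.inter_subset_left
    have hsfU : (SAT.and t₁ t₂).sf (A₁ ∪ A₂) :=
      ⟨sf_mono t₁ Finset.subset_union_left hsf1,
       sf_mono t₂ Finset.subset_union_right hsf2⟩
    have hAeq : A₁ ∪ A₂ = A := by
      by_contra hne
      exact hmin _ (Finset.ssubset_iff_subset_ne.mpr ⟨hsub, hne⟩) hsfU
    -- minimality of components
    have hmin1 : A₁ ∈ t₁.sem := by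
      rw [mem_sem]
      refine ⟨hsf1, fun B hB hsfB => ?_⟩
      obtain ⟨x, hxA₁, hxB⟩ := Finset.exists_of_ssubset hB
      have hxA₂ : x ∉ A₂ := fun hx =>
        Finset.disjoint_left.mp hd (Finset.mem_inter.mp hxA₁).2
          ((Finset.mem_inter.mp hx).2)
      have hC : B ∪ A₂ ⊂ A := by
        refine Finset.ssubset_iff_subset_ne.mpr
          ⟨(Finset.union_subset (hB.subset.trans Finset.inter_subset_left)
            Finset.inter_subset_left), fun he => ?_⟩
        have : x ∈ B ∪ A₂ := he ▸ (Finset.inter_subset_left hxA₁)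
        rcases Finset.mem_union.mp this with h | h
        · exact hxB h
        · exact hxA₂ h
      exact hmin _ hC
        ⟨sf_mono t₁ Finset.subset_union_left hsfB,
         sf_mono t₂ Finset.subset_union_right hsf2⟩
    have hmin2 : A₂ ∈ t₂.sem := by
      rw [mem_sem]
      refine ⟨hsf2, fun B hB hsfB => ?_⟩
      obtain ⟨x, hxA₂, hxB⟩ := Finset.exists_of_ssubset hB
      have hxA₁ : x ∉ A₁ := fun hx =>
        Finset.disjoint_left.mp hd ((Finset.mem_inter.mp hx).2)
          (Finset.mem_inter.mp hxA₂).2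
      have hC : A₁ ∪ B ⊂ A := by
        refine Finset.ssubset_iff_subset_ne.mpr
          ⟨(Finset.union_subset Finset.inter_subset_left
            (hB.subset.trans Finset.inter_subset_left)), fun he => ?_⟩
        have : x ∈ A₁ ∪ B := he ▸ (Finset.inter_subset_left hxA₂)
        rcases Finset.mem_union.mp this with h | h
        · exact hxA₁ h
        · exact hxB h
      exact hmin _ hC
        ⟨sf_mono t₁ Finset.subset_union_left hsf1,
         sf_mono t₂ Finset.subset_union_right hsfB⟩
    exact ⟨(A₁, A₂), Finset.mem_product.mpr ⟨hmin1, hmin2⟩, hAeq⟩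
  · rintro ⟨⟨A₁, A₂⟩, hp, rfl⟩
    obtain ⟨h1, h2⟩ := Finset.mem_product.mp hp
    have hl1 : A₁ ⊆ t₁.leaves := sem_subset_leaves h1
    have hl2 : A₂ ⊆ t₂.leaves := sem_subset_leaves h2
    obtain ⟨hsf1, hmin1⟩ := mem_sem.mp h1
    obtain ⟨hsf2, hmin2⟩ := mem_sem.mp h2
    refine ⟨⟨sf_mono t₁ Finset.subset_union_left hsf1,
      sf_mono t₂ Finset.subset_union_right hsf2⟩, fun B hB => ?_⟩
    rintro ⟨hsfB1, hsfB2⟩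
    have hBl1 : t₁.sf (B ∩ t₁.leaves) :=
      (sf_congr t₁ (fun a ha => by simp [Finset.mem_inter, ha])).mp hsfB1
    have hBl2 : t₂.sf (B ∩ t₂.leaves) :=
      (sf_congr t₂ (fun a ha => by simp [Finset.mem_inter, ha])).mp hsfB2
    have hsub1 : B ∩ t₁.leaves ⊆ A₁ := by
      intro a ha
      obtain ⟨haB, hal⟩ := Finset.mem_inter.mp ha
      rcases Finset.mem_union.mp (hB.subset haB) with h | h
      · exact h
      · exact absurd hal (Finset.disjoint_right.mp hd (hl2 h))
    have hsub2 : B ∩ t₂.leaves ⊆ A₂ := by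
      intro a ha
      obtain ⟨haB, hal⟩ := Finset.mem_inter.mp ha
      rcases Finset.mem_union.mp (hB.subset haB) with h | h
      · exact absurd hal (Finset.disjoint_left.mp hd (hl1 h))
      · exact h
    have heq1 : B ∩ t₁.leaves = A₁ := by
      by_contra hne
      exact hmin1 _ (Finset.ssubset_iff_subset_ne.mpr ⟨hsub1, hne⟩) hBl1
    have heq2 : B ∩ t₂.leaves = A₂ := by
      by_contra hne
      exact hmin2 _ (Finset.ssubset_iff_subset_ne.mpr ⟨hsub2, hne⟩) hBl2
    have : A₁ ∪ A₂ ⊆ B := by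
      rw [← heq1, ← heq2]
      exact Finset.union_subset Finset.inter_subset_left Finset.inter_subset_left
    exact (Finset.ssubset_iff_subset_ne.mp hB).2 (Finset.Subset.antisymm hB.subset this)

end SemAnd
section Fold

variable {V : Type} (dis con : V → V → V)
set_option linter.unusedSectionVars false

lemma fold_ocon_const
    [Std.Commutative (oop dis)] [Std.Associative (oop dis)]
    (hdistrib : ∀ x y z, con x (dis y z) = dis (con x y) (con x z))
    {γ : Type} (x : V) (G : γ → Option V) {t : Finset γ} (ht : t.Nonempty)
    (hG : ∀ b ∈ t, (G b).isSome) :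
    t.fold (oop dis) none (fun b => oop con (some x) (G b))
      = oop con (some x) (t.fold (oop dis) none G) := by
  induction ht using Finset.Nonempty.cons_induction with
  | singleton a =>
    rw [Finset.fold_singleton, Finset.fold_singleton, oop_none_right, oop_none_right]
  | cons a t ha hne ih =>
    rw [Finset.fold_cons, Finset.fold_cons,
      ih (fun b hb => hG b (by simp [hb]))]
    obtain ⟨y, hy⟩ := Option.isSome_iff_exists.mp (hG a (by simp))
    obtain ⟨w, hw⟩ := Option.isSome_iff_exists.mp
      (fold_isSome dis G hne (fun b hb => hG b (by simp [hb])))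
    rw [hy, hw]
    exact congrArg some (hdistrib x y w).symm

lemma fold_product
    [Std.Commutative (oop dis)] [Std.Associative (oop dis)]
    (hcon_comm : ∀ x y, con x y = con y x)
    (hdistrib : ∀ x y z, con x (dis y z) = dis (con x y) (con x z))
    {γ₁ γ₂ : Type} [DecidableEq γ₁] [DecidableEq γ₂]
    (F : γ₁ → Option V) (G : γ₂ → Option V) {s : Finset γ₁} {t : Finset γ₂}
    (hs : s.Nonempty) (ht : t.Nonempty)
    (hF : ∀ a ∈ s, (F a).isSome) (hG : ∀ b ∈ t, (G b).isSome) :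
    (s ×ˢ t).fold (oop dis) none (fun p => oop con (F p.1) (G p.2))
      = oop con (s.fold (oop dis) none F) (t.fold (oop dis) none G) := by
  induction hs using Finset.Nonempty.cons_induction with
  | singleton a =>
    obtain ⟨x, hx⟩ := Option.isSome_iff_exists.mp (hF a (by simp))
    rw [Finset.singleton_product, Finset.fold_map, Finset.fold_singleton, oop_none_right]
    rw [Finset.fold_congr (g := fun b => oop con (some x) (G b))
        (by intro b _; simp [Function.comp, hx]),
      fold_ocon_const dis con hdistrib x G ht hG, hx]
  | cons a s ha hne ih =>
    have hstep : (Finset.cons a s ha) ×ˢ t = ({a} ×ˢ t) ∪ (s ×ˢ t) := by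
      rw [Finset.cons_eq_insert, Finset.insert_eq, Finset.union_product]
    have hdisj : Disjoint (({a} : Finset γ₁) ×ˢ t) (s ×ˢ t) := by
      rw [Finset.disjoint_left]
      rintro ⟨p, q⟩ hp hq
      obtain ⟨hp1, _⟩ := Finset.mem_product.mp hp
      obtain ⟨hq1, _⟩ := Finset.mem_product.mp hq
      exact ha ((Finset.mem_singleton.mp hp1) ▸ hq1)
    rw [hstep, fold_union_disjoint dis _ hdisj,
      ih (fun b hb => hF b (by simp [hb])),
      Finset.fold_cons]
    -- compute fold over {a} ×ˢ t
    obtain ⟨x, hx⟩ := Option.isSome_iff_exists.mp (hF a (by simp))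
    have h1 : (({a} : Finset γ₁) ×ˢ t).fold (oop dis) none
        (fun p => oop con (F p.1) (G p.2)) = oop con (F a) (t.fold (oop dis) none G) := by
      rw [Finset.singleton_product, Finset.fold_map]
      rw [Finset.fold_congr (g := fun b => oop con (some x) (G b))
          (by intro b _; simp [Function.comp, hx]),
        fold_ocon_const dis con hdistrib x G ht hG, hx]
    rw [h1]
    obtain ⟨u, hu⟩ := Option.isSome_iff_exists.mp
      (fold_isSome dis F hne (fun b hb => hF b (by simp [hb])))
    obtain ⟨w, hw⟩ := Option.isSome_iff_exists.mp (fold_isSome dis G ht hG)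
    rw [hx, hu, hw]
    show some (dis (con x w) (con u w)) = some (con (dis x u) w)
    rw [hcon_comm (dis x u) w, hdistrib w x u, hcon_comm w x, hcon_comm w u]

end Fold
section MainLemma

variable {β V : Type} [Fintype β] [DecidableEq β]
set_option linter.unusedSectionVars false

lemma bu_main (dis con : V → V → V)
    [Std.Commutative (oop dis)] [Std.Associative (oop dis)]
    [Std.Commutative (oop con)] [Std.Associative (oop con)]
    (hcon_comm : ∀ x y, con x y = con y x)
    (hdistrib : ∀ x y z, con x (dis y z) = dis (con x y) (con x z))
    (α : β → V) :
    ∀ t : SAT β, t.isTree →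
      t.sem.fold (oop dis) none
        (fun A => A.fold (oop con) none (fun a => some (α a)))
        = some (t.bu dis con α) := by
  set M : Finset β → Option V :=
    fun A => A.fold (oop con) none (fun a => some (α a)) with hM
  intro t
  induction t with
  | bas a =>
    intro _
    rw [sem_bas, Finset.fold_singleton, oop_none_right]
    show ({a} : Finset β).fold (oop con) none _ = _
    rw [Finset.fold_singleton, oop_none_right]
    rfl
  | or t₁ t₂ ih₁ ih₂ =>
    rintro ⟨ht₁, ht₂, hd⟩
    have hsemd : Disjoint t₁.sem t₂.sem := by
      rw [Finset.disjoint_left]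
      intro A hA1 hA2
      obtain ⟨a, ha⟩ := sem_nonempty_mem hA1
      exact Finset.disjoint_left.mp hd (sem_subset_leaves hA1 ha)
        (sem_subset_leaves hA2 ha)
    rw [sem_or hd, fold_union_disjoint dis M hsemd, ih₁ ht₁, ih₂ ht₂]
    rfl
  | and t₁ t₂ ih₁ ih₂ =>
    rintro ⟨ht₁, ht₂, hd⟩
    have h₁ := ih₁ ht₁
    have h₂ := ih₂ ht₂
    have hne₁ : t₁.sem.Nonempty := by
      rcases t₁.sem.eq_empty_or_nonempty with he | h
      · rw [he, Finset.fold_empty] at h₁; exact absurd h₁ (by simp)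
      · exact h
    have hne₂ : t₂.sem.Nonempty := by
      rcases t₂.sem.eq_empty_or_nonempty with he | h
      · rw [he, Finset.fold_empty] at h₂; exact absurd h₂ (by simp)
      · exact h
    have hMs : ∀ (t : SAT β), ∀ A ∈ t.sem, (M A).isSome := by
      intro t A hA
      exact fold_isSome con _ (sem_nonempty_mem hA) (fun a _ => rfl)
    have hinj : ∀ p ∈ t₁.sem ×ˢ t₂.sem, ∀ q ∈ t₁.sem ×ˢ t₂.sem,
        p.1 ∪ p.2 = q.1 ∪ q.2 → p = q := by
      rintro ⟨A₁, A₂⟩ hp ⟨B₁, B₂⟩ hq he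
      obtain ⟨hp1, hp2⟩ := Finset.mem_product.mp hp
      obtain ⟨hq1, hq2⟩ := Finset.mem_product.mp hq
      have key : ∀ (C₁ C₂ : Finset β), C₁ ∈ t₁.sem → C₂ ∈ t₂.sem →
          (C₁ ∪ C₂) ∩ t₁.leaves = C₁ := by
        intro C₁ C₂ hC1 hC2
        apply Finset.Subset.antisymm
        · intro a ha
          obtain ⟨haU, hal⟩ := Finset.mem_inter.mp ha
          rcases Finset.mem_union.mp haU with h | h
          · exact h
          · exact absurd hal (Finset.disjoint_right.mp hd (sem_subset_leaves hC2 h))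
        · intro a ha
          exact Finset.mem_inter.mpr ⟨Finset.mem_union_left _ ha, sem_subset_leaves hC1 ha⟩
      have key2 : ∀ (C₁ C₂ : Finset β), C₁ ∈ t₁.sem → C₂ ∈ t₂.sem →
          (C₁ ∪ C₂) ∩ t₂.leaves = C₂ := by
        intro C₁ C₂ hC1 hC2
        apply Finset.Subset.antisymm
        · intro a ha
          obtain ⟨haU, hal⟩ := Finset.mem_inter.mp ha
          rcases Finset.mem_union.mp haU with h | h
          · exact absurd hal (Finset.disjoint_left.mp hd (sem_subset_leaves hC1 h))
          · exact h
        · intro a ha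
          exact Finset.mem_inter.mpr ⟨Finset.mem_union_right _ ha, sem_subset_leaves hC2 ha⟩
      have e1 : A₁ = B₁ := by
        rw [← key A₁ A₂ hp1 hp2, ← key B₁ B₂ hq1 hq2, he]
      have e2 : A₂ = B₂ := by
        rw [← key2 A₁ A₂ hp1 hp2, ← key2 B₁ B₂ hq1 hq2, he]
      simp [e1, e2]
    rw [sem_and hd, Finset.fold_image hinj]
    have hMsplit : ∀ p ∈ t₁.sem ×ˢ t₂.sem,
        (M ∘ fun p : Finset β × Finset β => p.1 ∪ p.2) p = oop con (M p.1) (M p.2) := by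
      rintro ⟨A₁, A₂⟩ hp
      obtain ⟨hp1, hp2⟩ := Finset.mem_product.mp hp
      have hdisj : Disjoint A₁ A₂ :=
        Finset.disjoint_of_subset_left (sem_subset_leaves hp1)
          (Finset.disjoint_of_subset_right (sem_subset_leaves hp2) hd)
      exact fold_union_disjoint con _ hdisj
    rw [Finset.fold_congr hMsplit,
      fold_product dis con hcon_comm hdistrib M M hne₁ hne₂ (hMs t₁) (hMs t₂),
      h₁, h₂]
    rfl

end MainLemma

/-- for a tree-structured static attack tree and a semiring
attribute domain `(V,▽,△)`, the bottom-up value equals the metric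
`▽_{A ∈ ⟦T⟧} △_{a ∈ A} α(a)`. -/
theorem stmt5 {β V : Type} [Fintype β] [DecidableEq β]
    (dis con : V → V → V)
    (hdis_assoc : ∀ x y z, dis (dis x y) z = dis x (dis y z))
    (hdis_comm : ∀ x y, dis x y = dis y x)
    (hcon_assoc : ∀ x y z, con (con x y) z = con x (con y z))
    (hcon_comm : ∀ x y, con x y = con y x)
    (hdistrib : ∀ x y z, con x (dis y z) = dis (con x y) (con x z))
    (α : β → V) (t : SAT β) (ht : t.isTree) :
    foldList dis
      ((t.sem.toList).filterMap (fun A => foldList con (A.toList.map α)))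
      = some (t.bu dis con α) := by

  haveI := oop_comm dis hdis_comm
  haveI := oop_assoc dis hdis_assoc
  haveI := oop_comm con hcon_comm
  haveI := oop_assoc con hcon_assoc
  have hg : (fun A : Finset β => foldList con (A.toList.map α))
      = fun A => A.fold (oop con) none (fun a => some (α a)) := by
    funext A
    rw [foldList_eq_foldr, List.map_map, fold_eq_foldr (oop con) none]
    rfl
  rw [foldList_filterMap, hg, ← fold_eq_foldr]
  exact bu_main dis con hcon_comm hdistrib α t ht
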